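/- In any loop, the identity x^λ\y · zx = x(yz·x) (Osborn) holds for all x,y,z if and only if the identity x\(xy·z) = (y·zx^ρ)/x^ρ holds for all x,y,z. -/

import Mathlib

/-- A loop: binary operation with two-sided identity and unique divisions. -/
class Loop (Q : Type*) extends Mul Q, One Q where
  ld : Q → Q → Q   -- left division: `ld x y = x \ y`
  rd : Q → Q → Q   -- right division: `rd x y = x / y`
  one_mul : ∀ x : Q, 1 * x = x
  mul_one : ∀ x : Q, x * 1 = x
  mul_ld : ∀ x y : Q, x * ld x y = y
  ld_mul : ∀ x y : Q, ld x (x * y) = y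
  rd_mul : ∀ x y : Q, rd x y * y = x
  mul_rd : ∀ x y : Q, rd (x * y) y = x

namespace Loop
variable {Q : Type*} [Loop Q]
/-- left inverse `x^λ = 1 / x` -/
def linv (x : Q) : Q := rd 1 x
/-- right inverse `x^ρ = x \ 1` -/
def rinv (x : Q) : Q := ld x 1
/-- left nucleus -/
def Nl (Q : Type*) [Loop Q] : Set Q := {a | ∀ x y : Q, a * (x * y) = (a * x) * y}
/-- middle nucleus -/
def Nm (Q : Type*) [Loop Q] : Set Q := {a | ∀ x y : Q, x * (a * y) = (x * a) * y}
/-- right nucleus -/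
def Nr (Q : Type*) [Loop Q] : Set Q := {a | ∀ x y : Q, (x * y) * a = x * (y * a)}
/-- the nucleus -/
def N (Q : Type*) [Loop Q] : Set Q := Nl Q ∩ Nm Q ∩ Nr Q
/-- `S` is a subloop -/
def IsSubloop (S : Set Q) : Prop :=
  (1 : Q) ∈ S ∧ ∀ a ∈ S, ∀ b ∈ S, a * b ∈ S ∧ ld a b ∈ S ∧ rd a b ∈ S
/-- normality of a subloop via the standard equational characterization -/
def IsNormal (S : Set Q) : Prop :=
  IsSubloop S ∧ ∀ x y : Q,
    (x * ·) '' S = (· * x) '' S ∧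
    (· * y) '' ((x * ·) '' S) = (x * ·) '' ((· * y) '' S) ∧
    (x * ·) '' ((y * ·) '' S) = ((x * y) * ·) '' S
end Loop
/-!
Substituting `x ↦ x^ρ` (so that `x^λ ↦ x`) turns the Osborn identity into
`x\y · zx^ρ = x^ρ(yz · x^ρ)`; its instance `z = 1` identifies the right-hand side with
`x\(yz) · x^ρ`. Both identities of the theorem are thus equivalent to
`x\y · zx^ρ = x\(yz) · x^ρ`: for the second one, multiply on the right by `x^ρ` and
substitute `y ↦ x\y`.
-/

namespace Loop

variable {Q : Type*} [Loop Q]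

theorem mul_rinv (x : Q) : x * rinv x = 1 := mul_ld x 1

theorem linv_mul (x : Q) : linv x * x = 1 := rd_mul 1 x

theorem linv_rinv (x : Q) : linv (rinv x) = x := by
  simpa only [linv, mul_rinv] using mul_rd x (rinv x)

theorem rinv_linv (x : Q) : rinv (linv x) = x := by
  simpa only [rinv, linv_mul] using ld_mul (linv x) x

theorem rd_eq_iff {x y z : Q} : rd x y = z ↔ x = z * y := by
  constructor
  · rintro rfl
    exact (rd_mul x y).symm
  · rintro rfl
    exact mul_rd z y

theorem osborn_iff_ld_mul_mul_rinv :
    (∀ x y z : Q, ld (linv x) y * (z * x) = x * ((y * z) * x)) ↔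
      ∀ x y z : Q, ld x y * (z * rinv x) = ld x (y * z) * rinv x := by
  constructor
  · intro h x y z
    have h' : ∀ y z : Q, ld x y * (z * rinv x) = rinv x * ((y * z) * rinv x) := by
      simpa only [linv_rinv] using h (rinv x)
    calc ld x y * (z * rinv x) = rinv x * ((y * z) * rinv x) := h' y z
      _ = ld x (y * z) * rinv x := by
        simpa only [Loop.one_mul, Loop.mul_one] using (h' (y * z) 1).symm
  · intro h x y z
    have h' : ∀ y z : Q, ld (linv x) y * (z * x) = ld (linv x) (y * z) * x := by
      simpa only [rinv_linv] using h (linv x)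
    calc ld (linv x) y * (z * x) = ld (linv x) (y * z) * x := h' y z
      _ = rinv (linv x) * ((y * z) * x) := by
        simpa only [Loop.one_mul, rinv] using (h' 1 (y * z)).symm
      _ = x * ((y * z) * x) := by rw [rinv_linv]

theorem ld_mul_mul_eq_rd_iff_ld_mul_mul_rinv :
    (∀ x y z : Q, ld x ((x * y) * z) = rd (y * (z * rinv x)) (rinv x)) ↔
      ∀ x y z : Q, ld x y * (z * rinv x) = ld x (y * z) * rinv x := by
  simp only [eq_comm (a := ld _ _), rd_eq_iff]
  constructor
  · intro h x y z
    simpa only [mul_ld] using h x (ld x y) z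
  · intro h x y z
    simpa only [ld_mul] using h x (x * y) z

end Loop

open Loop in
theorem stmt15 {Q : Type*} [Loop Q] :
    (∀ x y z : Q, ld (linv x) y * (z * x) = x * ((y * z) * x)) ↔
      (∀ x y z : Q, ld x ((x * y) * z) = rd (y * (z * rinv x)) (rinv x)) :=
  osborn_iff_ld_mul_mul_rinv.trans ld_mul_mul_eq_rd_iff_ld_mul_mul_rinv.symm
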